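/- In the setting of Theorem on cascade decompositions: if α = α⁽²⁾α⁽¹⁾ is a cascade of conservative scattering systems with intermediate space V and state space X = X⁽²⁾ ⊕ V ⊕ X⁽¹⁾, and X_cc ⊆ X is the closely connected subspace of α, then the subspace X_cc⁽²⁾ := closure of P_{X_cc} X⁽²⁾ is invariant for all (A_cc)_k = A_k|_{X_cc}, and the subspaces (ζG_{α_cc})*(X_cc⁽²⁾ ⊕ Y) ⊖ X_cc⁽²⁾ coincide for all ζ ∈ 𝕋^N, being equal to (closure of P_{X_cc}(X⁽²⁾ ⊕ V)) ⊖ (closure of P_{X_cc} X⁽²⁾). -/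

import Mathlib

noncomputable section

open scoped ComplexConjugate

/-- A bundled separable complex Hilbert space. -/
structure HilbertSp : Type 1 where
  carrier : Type
  [iN : NormedAddCommGroup carrier]
  [iI : InnerProductSpace ℂ carrier]
  [iC : CompleteSpace carrier]
  [iS : TopologicalSpace.SeparableSpace carrier]

attribute [instance] HilbertSp.iN HilbertSp.iI HilbertSp.iC HilbertSp.iS

variable {N : ℕ}

/-- The linear pencil `z ↦ Σₖ z_k T_k` associated with an `N`-tuple of operators. -/
def pencil {E F : Type*} [NormedAddCommGroup E] [NormedAddCommGroup F]
    [NormedSpace ℂ E] [NormedSpace ℂ F]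
    (T : Fin N → (E →L[ℂ] F)) (z : Fin N → ℂ) : E →L[ℂ] F := ∑ k, z k • T k

/-- membership in the unit torus `𝕋^N` -/
def onTorus (ζ : Fin N → ℂ) : Prop := ∀ k, ‖ζ k‖ = 1

/-- membership in the open unit polydisk `𝔻^N` -/
def inPolydisk (z : Fin N → ℂ) : Prop := ∀ k, ‖z k‖ < 1

/-- `θ` has a zero of multiplicity `m` at `z = 0`: it is holomorphic near `0` and the
homogeneous terms of its Taylor expansion of degree `< m` vanish while that of degree `m`
does not. -/
def HasZeroOfOrder {U Y : Type*} [NormedAddCommGroup U] [NormedAddCommGroup Y]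
    [NormedSpace ℂ U] [NormedSpace ℂ Y]
    (θ : (Fin N → ℂ) → (U →L[ℂ] Y)) (m : ℕ) : Prop :=
  ∃ p : FormalMultilinearSeries ℂ (Fin N → ℂ) (U →L[ℂ] Y),
    HasFPowerSeriesAt θ p 0 ∧ (∀ j, j < m → ∀ z : Fin N → ℂ, (p j) (fun _ => z) = 0) ∧
      (∃ z : Fin N → ℂ, (p m) (fun _ => z) ≠ 0)

/-- The product `(zL⁽¹⁾)(zL⁽²⁾)⋯(zL⁽ᵐ⁾) : Ysp m → Ysp 0` of linear pencils along a chain of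
spaces, where `L j k : Ysp (j+1) → Ysp j` plays the role of `L_k^{(j+1)}`. -/
def chainMul {Ysp : ℕ → Type*} [∀ j, NormedAddCommGroup (Ysp j)] [∀ j, NormedSpace ℂ (Ysp j)]
    (L : (j : ℕ) → Fin N → (Ysp (j + 1) →L[ℂ] Ysp j)) (z : Fin N → ℂ) :
    (m : ℕ) → (Ysp m →L[ℂ] Ysp 0)
  | 0 => ContinuousLinearMap.id ℂ (Ysp 0)
  | (m + 1) => (chainMul L z m).comp (pencil (L m) z)

/-- The product `(zR⁽ᵐ⁾)⋯(zR⁽¹⁾) : Usp 0 → Usp m` of linear pencils along a chain of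
spaces, where `R j k : Usp j → Usp (j+1)` plays the role of `R_k^{(j+1)}`. -/
def chainMulR {Usp : ℕ → Type*} [∀ j, NormedAddCommGroup (Usp j)] [∀ j, NormedSpace ℂ (Usp j)]
    (R : (j : ℕ) → Fin N → (Usp j →L[ℂ] Usp (j + 1))) (z : Fin N → ℂ) :
    (m : ℕ) → (Usp 0 →L[ℂ] Usp m)
  | 0 => ContinuousLinearMap.id ℂ (Usp 0)
  | (m + 1) => (pencil (R m) z).comp (chainMulR R z m)

/-- the Hilbert space direct sum `E ⊕ F` -/
abbrev hS (E F : Type*) := WithLp 2 (E × F)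

section blocks

variable (E F : Type*) [NormedAddCommGroup E] [NormedAddCommGroup F]
  [NormedSpace ℂ E] [NormedSpace ℂ F]

/-- inclusion of the first summand -/
def inlL : E →L[ℂ] hS E F :=
  ((WithLp.prodContinuousLinearEquiv 2 ℂ E F).symm : E × F →L[ℂ] hS E F).comp
    (ContinuousLinearMap.inl ℂ E F)

/-- inclusion of the second summand -/
def inrL : F →L[ℂ] hS E F :=
  ((WithLp.prodContinuousLinearEquiv 2 ℂ E F).symm : E × F →L[ℂ] hS E F).comp
    (ContinuousLinearMap.inr ℂ E F)

/-- projection onto the first summand -/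
def fstL : hS E F →L[ℂ] E :=
  (ContinuousLinearMap.fst ℂ E F).comp
    (WithLp.prodContinuousLinearEquiv 2 ℂ E F : hS E F →L[ℂ] E × F)

/-- projection onto the second summand -/
def sndL : hS E F →L[ℂ] F :=
  (ContinuousLinearMap.snd ℂ E F).comp
    (WithLp.prodContinuousLinearEquiv 2 ℂ E F : hS E F →L[ℂ] E × F)

end blocks

/-- the block operator `[[A,B],[C,D]] : X ⊕ U → X' ⊕ Y'` -/
def block2 {X U X' Y' : Type*} [NormedAddCommGroup X] [NormedAddCommGroup U]
    [NormedAddCommGroup X'] [NormedAddCommGroup Y']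
    [NormedSpace ℂ X] [NormedSpace ℂ U] [NormedSpace ℂ X'] [NormedSpace ℂ Y']
    (A : X →L[ℂ] X') (B : U →L[ℂ] X') (C : X →L[ℂ] Y') (D : U →L[ℂ] Y') :
    hS X U →L[ℂ] hS X' Y' :=
  (inlL X' Y').comp (A.comp (fstL X U)) + (inlL X' Y').comp (B.comp (sndL X U)) +
    (inrL X' Y').comp (C.comp (fstL X U)) + (inrL X' Y').comp (D.comp (sndL X U))

/-- the transfer function `θ_α(z) = zD + zC (1 - zA)⁻¹ zB` of the system
`α = (N; A, B, C, D; X, U, Y)` -/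
def transfer {X U Y : Type*} [NormedAddCommGroup X] [NormedAddCommGroup U] [NormedAddCommGroup Y]
    [NormedSpace ℂ X] [NormedSpace ℂ U] [NormedSpace ℂ Y]
    (A : Fin N → (X →L[ℂ] X)) (B : Fin N → (U →L[ℂ] X)) (C : Fin N → (X →L[ℂ] Y))
    (D : Fin N → (U →L[ℂ] Y)) (z : Fin N → ℂ) : U →L[ℂ] Y :=
  pencil D z + (pencil C z).comp ((Ring.inverse (1 - pencil A z)).comp (pencil B z))

/-- unitarity of a bounded operator between Hilbert spaces -/
def IsUnitaryOp {E F : Type*} [NormedAddCommGroup E] [InnerProductSpace ℂ E] [CompleteSpace E]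
    [NormedAddCommGroup F] [InnerProductSpace ℂ F] [CompleteSpace F] (W : E →L[ℂ] F) : Prop :=
  (ContinuousLinearMap.adjoint W).comp W = 1 ∧ W.comp (ContinuousLinearMap.adjoint W) = 1

/-- the block operator `G_α` of a system, as an `N`-tuple -/
def sysBlock {X U Y : Type*} [NormedAddCommGroup X] [NormedAddCommGroup U] [NormedAddCommGroup Y]
    [NormedSpace ℂ X] [NormedSpace ℂ U] [NormedSpace ℂ Y]
    (A : Fin N → (X →L[ℂ] X)) (B : Fin N → (U →L[ℂ] X)) (C : Fin N → (X →L[ℂ] Y))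
    (D : Fin N → (U →L[ℂ] Y)) : Fin N → (hS X U →L[ℂ] hS X Y) :=
  fun k => block2 (A k) (B k) (C k) (D k)

/-- `α` is a conservative scattering system: `ζ G_α` is unitary for every `ζ ∈ 𝕋^N`. -/
def Conservative {X U Y : Type*} [NormedAddCommGroup X] [InnerProductSpace ℂ X] [CompleteSpace X]
    [NormedAddCommGroup U] [InnerProductSpace ℂ U] [CompleteSpace U]
    [NormedAddCommGroup Y] [InnerProductSpace ℂ Y] [CompleteSpace Y]
    (A : Fin N → (X →L[ℂ] X)) (B : Fin N → (U →L[ℂ] X)) (C : Fin N → (X →L[ℂ] Y))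
    (D : Fin N → (U →L[ℂ] Y)) : Prop :=
  ∀ ζ : Fin N → ℂ, onTorus ζ → IsUnitaryOp (pencil (sysBlock A B C D) ζ)
section cascade

variable {N : ℕ} {X1 V X2 U Y : Type*}
  [NormedAddCommGroup X1] [NormedAddCommGroup V] [NormedAddCommGroup X2]
  [NormedAddCommGroup U] [NormedAddCommGroup Y]
  [NormedSpace ℂ X1] [NormedSpace ℂ V] [NormedSpace ℂ X2]
  [NormedSpace ℂ U] [NormedSpace ℂ Y]

/-- the main operators `A_k` of the cascade connection `α⁽²⁾α⁽¹⁾`, acting on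
`X⁽²⁾ ⊕ V ⊕ X⁽¹⁾` by the block matrix `[[A⁽²⁾, B⁽²⁾, 0],[0,0,C⁽¹⁾],[0,0,A⁽¹⁾]]` -/
def cascA (A1 : Fin N → (X1 →L[ℂ] X1)) (C1 : Fin N → (X1 →L[ℂ] V))
    (A2 : Fin N → (X2 →L[ℂ] X2)) (B2 : Fin N → (V →L[ℂ] X2)) :
    Fin N → (hS X2 (hS V X1) →L[ℂ] hS X2 (hS V X1)) := fun k =>
  block2 (A2 k) ((B2 k).comp (fstL V X1)) 0 (block2 0 (C1 k) 0 (A1 k))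

/-- the input operators `B_k = col(0, D⁽¹⁾, B⁽¹⁾)` of the cascade connection -/
def cascB (B1 : Fin N → (U →L[ℂ] X1)) (D1 : Fin N → (U →L[ℂ] V)) :
    Fin N → (U →L[ℂ] hS X2 (hS V X1)) := fun k =>
  (inrL X2 (hS V X1)).comp ((inlL V X1).comp (D1 k) + (inrL V X1).comp (B1 k))

/-- the output operators `C_k = [C⁽²⁾, D⁽²⁾, 0]` of the cascade connection -/
def cascC (C2 : Fin N → (X2 →L[ℂ] Y)) (D2 : Fin N → (V →L[ℂ] Y)) :
    Fin N → (hS X2 (hS V X1) →L[ℂ] Y) := fun k =>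
  (C2 k).comp (fstL X2 (hS V X1)) + (D2 k).comp ((fstL V X1).comp (sndL X2 (hS V X1)))

/-- the external operators `D_k = 0` of the cascade connection -/
def cascD : Fin N → (U →L[ℂ] Y) := fun _ => 0

end cascade

section cc

variable {N : ℕ} {X U Y : Type*}
  [NormedAddCommGroup X] [InnerProductSpace ℂ X] [CompleteSpace X]
  [NormedAddCommGroup U] [InnerProductSpace ℂ U] [CompleteSpace U]
  [NormedAddCommGroup Y] [InnerProductSpace ℂ Y] [CompleteSpace Y]

/-- the monomial `p(A, A*)` associated with a word `w` in the `2N` noncommuting letters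
`A_1, …, A_N, A_1^*, …, A_N^*` -/
def wordOp (A : Fin N → (X →L[ℂ] X)) (w : List (Fin N × Bool)) : X →L[ℂ] X :=
  (w.map (fun p => if p.2 then A p.1 else ContinuousLinearMap.adjoint (A p.1))).prod

/-- the generating set `⋃ p(A,A*)(B_k U + C_j* Y)` of the closely connected subspace -/
def ccSet (A : Fin N → (X →L[ℂ] X)) (B : Fin N → (U →L[ℂ] X)) (C : Fin N → (X →L[ℂ] Y)) :
    Set X :=
  {x | ∃ (w : List (Fin N × Bool)) (k : Fin N) (u : U), x = wordOp A w (B k u)} ∪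
    {x | ∃ (w : List (Fin N × Bool)) (j : Fin N) (y : Y),
      x = wordOp A w ((ContinuousLinearMap.adjoint (C j)) y)}

/-- the closely connected subspace `X_cc`: the smallest closed subspace containing all
`B_k U`, `C_j^* Y` and reducing every `A_k` -/
def ccSpace (A : Fin N → (X →L[ℂ] X)) (B : Fin N → (U →L[ℂ] X)) (C : Fin N → (X →L[ℂ] Y)) :
    Submodule ℂ X :=
  (Submodule.span ℂ (ccSet A B C)).topologicalClosure

/-- a system is closely connected if `X_cc = X` -/
def CloselyConnected (A : Fin N → (X →L[ℂ] X)) (B : Fin N → (U →L[ℂ] X))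
    (C : Fin N → (X →L[ℂ] Y)) : Prop :=
  ccSpace A B C = ⊤

end cc


/-! ### Auxiliary lemmas -/

local notation "adjL" => ContinuousLinearMap.adjoint

section hSAux

variable {E F : Type*} [NormedAddCommGroup E] [NormedAddCommGroup F]
  [NormedSpace ℂ E] [NormedSpace ℂ F]

/-- constructor for elements of `hS E F` -/
def hmk (a : E) (b : F) : hS E F := (WithLp.equiv 2 (E × F)).symm (a, b)

@[simp] lemma fstL_hmk (a : E) (b : F) : fstL E F (hmk a b) = a := rfl
@[simp] lemma sndL_hmk (a : E) (b : F) : sndL E F (hmk a b) = b := rfl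
@[simp] lemma inlL_eq (a : E) : inlL E F a = hmk a 0 := rfl
@[simp] lemma inrL_eq (b : F) : inrL E F b = hmk 0 b := rfl

lemma hS_ext {z w : hS E F} (h1 : fstL E F z = fstL E F w) (h2 : sndL E F z = sndL E F w) :
    z = w := (WithLp.equiv 2 (E × F)).injective (Prod.ext h1 h2)

@[simp] lemma hmk_fst_snd (z : hS E F) : hmk (fstL E F z) (sndL E F z) = z := rfl

omit [NormedSpace ℂ E] [NormedSpace ℂ F] in
@[simp] lemma hmk_add (a a' : E) (b b' : F) : hmk a b + hmk a' b' = hmk (a + a') (b + b') := rfl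

omit [NormedSpace ℂ E] [NormedSpace ℂ F] in
lemma zero_hmk : (0 : hS E F) = hmk 0 0 := rfl

omit [NormedSpace ℂ E] [NormedSpace ℂ F] in
@[simp] lemma hmk_1 (a : E) (b : F) : (hmk a b).fst = a := rfl

omit [NormedSpace ℂ E] [NormedSpace ℂ F] in
@[simp] lemma hmk_2 (a : E) (b : F) : (hmk a b).snd = b := rfl

@[simp] lemma hmk_smul (c : ℂ) (a : E) (b : F) : c • hmk a b = hmk (c • a) (c • b) := rfl

@[simp] lemma hmk_sum {ι : Type*} (s : Finset ι) (f : ι → E) (g : ι → F) :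
    ∑ i ∈ s, hmk (f i) (g i) = hmk (∑ i ∈ s, f i) (∑ i ∈ s, g i) := by
  apply hS_ext <;> simp [map_sum]

lemma fstL_apply' (z : hS E F) : fstL E F z = z.fst := rfl
lemma sndL_apply' (z : hS E F) : sndL E F z = z.snd := rfl

end hSAux

section blockAux

variable {X U X' Y' : Type*} [NormedAddCommGroup X] [NormedAddCommGroup U]
    [NormedAddCommGroup X'] [NormedAddCommGroup Y']
    [NormedSpace ℂ X] [NormedSpace ℂ U] [NormedSpace ℂ X'] [NormedSpace ℂ Y']

lemma fstL_block2 (A : X →L[ℂ] X') (B : U →L[ℂ] X') (C : X →L[ℂ] Y') (D : U →L[ℂ] Y')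
    (z : hS X U) : fstL X' Y' (block2 A B C D z) = A (fstL X U z) + B (sndL X U z) := by
  simp [block2]

lemma sndL_block2 (A : X →L[ℂ] X') (B : U →L[ℂ] X') (C : X →L[ℂ] Y') (D : U →L[ℂ] Y')
    (z : hS X U) : sndL X' Y' (block2 A B C D z) = C (fstL X U z) + D (sndL X U z) := by
  simp [block2]

lemma block2_apply (A : X →L[ℂ] X') (B : U →L[ℂ] X') (C : X →L[ℂ] Y') (D : U →L[ℂ] Y')
    (a : X) (b : U) : block2 A B C D (hmk a b) = hmk (A a + B b) (C a + D b) := by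
  apply hS_ext <;> simp [block2]

end blockAux

section pencilAux

variable {N : ℕ} {E F G : Type*} [NormedAddCommGroup E] [NormedAddCommGroup F]
    [NormedAddCommGroup G] [NormedSpace ℂ E] [NormedSpace ℂ F] [NormedSpace ℂ G]

lemma pencil_apply (T : Fin N → (E →L[ℂ] F)) (z : Fin N → ℂ) (x : E) :
    pencil T z x = ∑ k, z k • T k x := by simp [pencil]

lemma pencil_mem {S : Submodule ℂ F} (T : Fin N → (E →L[ℂ] F)) (z : Fin N → ℂ) (x : E)
    (h : ∀ k, T k x ∈ S) : pencil T z x ∈ S := by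
  rw [pencil_apply]
  exact Submodule.sum_mem _ fun k _ => S.smul_mem _ (h k)

lemma pencil_zero (z : Fin N → ℂ) : pencil (fun _ => (0 : E →L[ℂ] F)) z = 0 := by
  simp [pencil]

lemma pencil_add (S T : Fin N → (E →L[ℂ] F)) (z : Fin N → ℂ) :
    pencil (fun k => S k + T k) z = pencil S z + pencil T z := by
  ext x
  simp [pencil_apply, smul_add, Finset.sum_add_distrib]

lemma pencil_comp_left (T : Fin N → (E →L[ℂ] F)) (R : F →L[ℂ] G) (z : Fin N → ℂ) :
    pencil (fun k => R.comp (T k)) z = R.comp (pencil T z) := by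
  ext x
  simp [pencil_apply, map_sum]

lemma pencil_comp_right (T : Fin N → (E →L[ℂ] F)) (R : G →L[ℂ] E) (z : Fin N → ℂ) :
    pencil (fun k => (T k).comp R) z = (pencil T z).comp R := by
  ext x
  simp [pencil_apply]

lemma pencil_block2 {X U X' Y' : Type*} [NormedAddCommGroup X] [NormedAddCommGroup U]
    [NormedAddCommGroup X'] [NormedAddCommGroup Y']
    [NormedSpace ℂ X] [NormedSpace ℂ U] [NormedSpace ℂ X'] [NormedSpace ℂ Y']
    (A : Fin N → (X →L[ℂ] X')) (B : Fin N → (U →L[ℂ] X'))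
    (C : Fin N → (X →L[ℂ] Y')) (D : Fin N → (U →L[ℂ] Y')) (z : Fin N → ℂ) :
    pencil (fun k => block2 (A k) (B k) (C k) (D k)) z =
      block2 (pencil A z) (pencil B z) (pencil C z) (pencil D z) := by
  apply ContinuousLinearMap.ext
  intro w
  apply hS_ext <;>
    simp [pencil_apply, fstL_block2, sndL_block2, smul_add, Finset.sum_add_distrib]

end pencilAux

section adjAux

variable {E F : Type*} [NormedAddCommGroup E] [NormedAddCommGroup F]
    [InnerProductSpace ℂ E] [InnerProductSpace ℂ F] [CompleteSpace E] [CompleteSpace F]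

lemma inner_hS (z w : hS E F) :
    inner (𝕜 := ℂ) z w =
      inner (𝕜 := ℂ) (fstL E F z) (fstL E F w) + inner (𝕜 := ℂ) (sndL E F z) (sndL E F w) :=
  WithLp.prod_inner_apply z w

lemma adjoint_zero' : adjL (0 : E →L[ℂ] F) = 0 := map_zero ContinuousLinearMap.adjoint

lemma adjoint_add' (S T : E →L[ℂ] F) : adjL (S + T) = adjL S + adjL T :=
  map_add ContinuousLinearMap.adjoint S T

lemma adjoint_inlL : adjL (inlL E F) = fstL E F := by
  symm
  rw [ContinuousLinearMap.eq_adjoint_iff]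
  intro x y
  simp [inner_hS, fstL_apply', sndL_apply']

lemma adjoint_inrL : adjL (inrL E F) = sndL E F := by
  symm
  rw [ContinuousLinearMap.eq_adjoint_iff]
  intro x y
  simp [inner_hS, fstL_apply', sndL_apply']

lemma adjoint_fstL : adjL (fstL E F) = inlL E F := by
  symm
  rw [ContinuousLinearMap.eq_adjoint_iff]
  intro x y
  simp [inner_hS, fstL_apply', sndL_apply']

lemma adjoint_sndL : adjL (sndL E F) = inrL E F := by
  symm
  rw [ContinuousLinearMap.eq_adjoint_iff]
  intro x y
  simp [inner_hS, fstL_apply', sndL_apply']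

lemma adjoint_pencil {N : ℕ} (T : Fin N → (E →L[ℂ] F)) (z : Fin N → ℂ) :
    adjL (pencil T z) = pencil (fun k => adjL (T k)) (fun k => conj (z k)) := by
  symm
  rw [ContinuousLinearMap.eq_adjoint_iff]
  intro x y
  simp [pencil_apply, inner_sum, sum_inner, inner_smul_left, inner_smul_right,
    ContinuousLinearMap.adjoint_inner_left]

lemma adjoint_block2 {X U X' Y' : Type*} [NormedAddCommGroup X] [NormedAddCommGroup U]
    [NormedAddCommGroup X'] [NormedAddCommGroup Y']
    [InnerProductSpace ℂ X] [InnerProductSpace ℂ U] [InnerProductSpace ℂ X']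
    [InnerProductSpace ℂ Y'] [CompleteSpace X] [CompleteSpace U] [CompleteSpace X']
    [CompleteSpace Y'] (A : X →L[ℂ] X') (B : U →L[ℂ] X') (C : X →L[ℂ] Y') (D : U →L[ℂ] Y') :
    adjL (block2 A B C D) = block2 (adjL A) (adjL C) (adjL B) (adjL D) := by
  symm
  rw [ContinuousLinearMap.eq_adjoint_iff]
  intro x y
  rw [← hmk_fst_snd x, ← hmk_fst_snd y, block2_apply, block2_apply]
  simp only [inner_hS, fstL_hmk, sndL_hmk, inner_add_left, inner_add_right,
    ContinuousLinearMap.adjoint_inner_left]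
  ring

end adjAux

section projAux

variable {X U : Type*} [NormedAddCommGroup X] [InnerProductSpace ℂ X] [CompleteSpace X]
    [NormedAddCommGroup U] [InnerProductSpace ℂ U] [CompleteSpace U]

lemma orth_inv {S : Submodule ℂ X} {T : X →L[ℂ] X} (hT : ∀ m ∈ S, T m ∈ S) {q : X}
    (hq : q ∈ Sᗮ) : adjL T q ∈ Sᗮ := by
  rw [Submodule.mem_orthogonal]
  intro m hm
  rw [ContinuousLinearMap.adjoint_inner_right]
  exact (Submodule.mem_orthogonal S q).mp hq _ (hT m hm)

lemma adj_vanish {S : Submodule ℂ X} {T : U →L[ℂ] X} (hT : ∀ u, T u ∈ S) {q : X}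
    (hq : q ∈ Sᗮ) : adjL T q = 0 := by
  rw [← inner_self_eq_zero (𝕜 := ℂ) (x := adjL T q),
    ContinuousLinearMap.adjoint_inner_left]
  exact (Submodule.mem_orthogonal' S q).mp hq _ (hT _)

lemma proj_comm {S : Submodule ℂ X} [CompleteSpace S] {T : X →L[ℂ] X}
    (h1 : ∀ m ∈ S, T m ∈ S) (h2 : ∀ q ∈ Sᗮ, T q ∈ Sᗮ) (x : X) :
    (Submodule.orthogonalProjection S (T x) : X) = T (Submodule.orthogonalProjection S x) := by
  have hx : T x = T (Submodule.orthogonalProjection S x : X) + T (x - Submodule.orthogonalProjection S x) := by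
    rw [← map_add]
    congr 1
    abel
  have e1 : (Submodule.orthogonalProjection S (T (Submodule.orthogonalProjection S x : X)) : X) =
      T (Submodule.orthogonalProjection S x) :=
    Submodule.starProjection_eq_self_iff.mpr (h1 _ (Submodule.orthogonalProjection S x).2)
  have e2 : Submodule.orthogonalProjection S (T (x - (Submodule.orthogonalProjection S x : X))) = 0 :=
    Submodule.orthogonalProjectionOnto_apply_of_mem_orthogonal
      (h2 _ (Submodule.sub_starProjection_mem_orthogonal x))
  rw [hx, map_add, Submodule.coe_add, e1, e2, Submodule.coe_zero, add_zero]

end projAux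

section ccAux

variable {N : ℕ} {X U Y : Type*}
  [NormedAddCommGroup X] [InnerProductSpace ℂ X] [CompleteSpace X]
  [NormedAddCommGroup U] [InnerProductSpace ℂ U] [CompleteSpace U]
  [NormedAddCommGroup Y] [InnerProductSpace ℂ Y] [CompleteSpace Y]
  (A : Fin N → (X →L[ℂ] X)) (B : Fin N → (U →L[ℂ] X)) (C : Fin N → (X →L[ℂ] Y))

lemma wordOp_nil : wordOp A ([] : List (Fin N × Bool)) = 1 := by simp [wordOp]

lemma wordOp_cons (p : Fin N × Bool) (w : List (Fin N × Bool)) :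
    wordOp A (p :: w) = (if p.2 then A p.1 else adjL (A p.1)) * wordOp A w := by
  simp [wordOp]

lemma ccSpace_mem_B (k : Fin N) (u : U) : B k u ∈ ccSpace A B C :=
  Submodule.le_topologicalClosure _
    (Submodule.subset_span (Or.inl ⟨[], k, u, by rw [wordOp_nil]; rfl⟩))

lemma ccSpace_mem_Cadj (j : Fin N) (y : Y) : adjL (C j) y ∈ ccSpace A B C :=
  Submodule.le_topologicalClosure _
    (Submodule.subset_span (Or.inr ⟨[], j, y, by rw [wordOp_nil]; rfl⟩))

lemma ccSpace_stable {T : X →L[ℂ] X} (hT : ∀ s ∈ ccSet A B C, T s ∈ ccSet A B C) :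
    ∀ x ∈ ccSpace A B C, T x ∈ ccSpace A B C := by
  intro x hx
  have h1 : Submodule.span ℂ (ccSet A B C) ≤ (ccSpace A B C).comap T.toLinearMap := by
    rw [Submodule.span_le]
    intro s hs
    exact Submodule.le_topologicalClosure _ (Submodule.subset_span (hT s hs))
  have h2 : IsClosed (((ccSpace A B C).comap T.toLinearMap : Submodule ℂ X) : Set X) :=
    (Submodule.isClosed_topologicalClosure _).preimage T.continuous
  exact Submodule.topologicalClosure_minimal _ h1 h2 hx

lemma ccSpace_inv (k : Fin N) : ∀ x ∈ ccSpace A B C, A k x ∈ ccSpace A B C := by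
  apply ccSpace_stable
  rintro s (⟨w, k', u, rfl⟩ | ⟨w, j, y, rfl⟩)
  · exact Or.inl ⟨(k, true) :: w, k', u, by
      rw [wordOp_cons]; simp [ContinuousLinearMap.mul_apply]⟩
  · exact Or.inr ⟨(k, true) :: w, j, y, by
      rw [wordOp_cons]; simp [ContinuousLinearMap.mul_apply]⟩

lemma ccSpace_inv_adj (k : Fin N) : ∀ x ∈ ccSpace A B C, adjL (A k) x ∈ ccSpace A B C := by
  apply ccSpace_stable
  rintro s (⟨w, k', u, rfl⟩ | ⟨w, j, y, rfl⟩)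
  · exact Or.inl ⟨(k, false) :: w, k', u, by
      rw [wordOp_cons]; simp [ContinuousLinearMap.mul_apply]⟩
  · exact Or.inr ⟨(k, false) :: w, j, y, by
      rw [wordOp_cons]; simp [ContinuousLinearMap.mul_apply]⟩

end ccAux

set_option maxHeartbeats 4000000 in
set_option synthInstance.maxHeartbeats 400000 in
/-- for a cascade `α = α⁽²⁾α⁽¹⁾` of conservative scattering systems with
state space `X = X⁽²⁾ ⊕ V ⊕ X⁽¹⁾`, the subspace `X_cc⁽²⁾ := clos(P_{X_cc} X⁽²⁾)` of the
closely connected subspace `X_cc` is invariant for all compressed main operators `(A_cc)_k`,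
and for every `ζ ∈ 𝕋^N` the subspace `(ζG_{α_cc})*(X_cc⁽²⁾ ⊕ Y) ⊖ X_cc⁽²⁾` equals
`clos(P_{X_cc}(X⁽²⁾ ⊕ V)) ⊖ clos(P_{X_cc} X⁽²⁾)`. -/
theorem cc_compression_inherits_decomposition_data {N : ℕ} {X1 V X2 U Y : Type}
    [NormedAddCommGroup X1] [InnerProductSpace ℂ X1] [CompleteSpace X1]
    [TopologicalSpace.SeparableSpace X1]
    [NormedAddCommGroup V] [InnerProductSpace ℂ V] [CompleteSpace V]
    [TopologicalSpace.SeparableSpace V]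
    [NormedAddCommGroup X2] [InnerProductSpace ℂ X2] [CompleteSpace X2]
    [TopologicalSpace.SeparableSpace X2]
    [NormedAddCommGroup U] [InnerProductSpace ℂ U] [CompleteSpace U]
    [TopologicalSpace.SeparableSpace U]
    [NormedAddCommGroup Y] [InnerProductSpace ℂ Y] [CompleteSpace Y]
    [TopologicalSpace.SeparableSpace Y]
    (A1 : Fin N → (X1 →L[ℂ] X1)) (B1 : Fin N → (U →L[ℂ] X1))
    (C1 : Fin N → (X1 →L[ℂ] V)) (D1 : Fin N → (U →L[ℂ] V))
    (A2 : Fin N → (X2 →L[ℂ] X2)) (B2 : Fin N → (V →L[ℂ] X2))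
    (C2 : Fin N → (X2 →L[ℂ] Y)) (D2 : Fin N → (V →L[ℂ] Y))
    (hc1 : Conservative A1 B1 C1 D1) (hc2 : Conservative A2 B2 C2 D2) :
    haveI : CompleteSpace
        (ccSpace (cascA A1 C1 A2 B2) (cascB (X2 := X2) B1 D1) (cascC C2 D2)) :=
      (Submodule.isClosed_topologicalClosure _).completeSpace_coe
    let Xcc := ccSpace (cascA A1 C1 A2 B2) (cascB (X2 := X2) B1 D1) (cascC C2 D2)
    let P := Submodule.orthogonalProjection Xcc
    let Acc : Fin N → (Xcc →L[ℂ] Xcc) :=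
      fun k => (P.comp ((cascA A1 C1 A2 B2 k).comp Xcc.subtypeL))
    let Bcc : Fin N → (U →L[ℂ] Xcc) := fun k => P.comp (cascB (X2 := X2) B1 D1 k)
    let Ccc : Fin N → (Xcc →L[ℂ] Y) := fun k => (cascC C2 D2 k).comp Xcc.subtypeL
    let X2sub : Submodule ℂ (hS X2 (hS V X1)) :=
      (⊤ : Submodule ℂ X2).map (inlL X2 (hS V X1)).toLinearMap
    let X2Vsub : Submodule ℂ (hS X2 (hS V X1)) :=
      LinearMap.ker ((sndL V X1).comp (sndL X2 (hS V X1))).toLinearMap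
    let Xcc2 : Submodule ℂ Xcc := (X2sub.map P.toLinearMap).topologicalClosure
    let Ecc : Submodule ℂ Xcc := (X2Vsub.map P.toLinearMap).topologicalClosure
    (∀ k, ∀ x ∈ Xcc2, Acc k x ∈ Xcc2) ∧
      ∀ ζ : Fin N → ℂ, onTorus ζ →
        ((Xcc2.comap (fstL Xcc Y).toLinearMap).map
            (ContinuousLinearMap.adjoint
              (pencil (sysBlock Acc Bcc Ccc cascD) ζ)).toLinearMap) ⊓
          (Xcc2.map (inlL Xcc U).toLinearMap)ᗮ =
        (Ecc ⊓ Xcc2ᗮ).map (inlL Xcc U).toLinearMap := by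
  classical
  haveI hcs : CompleteSpace
      (ccSpace (cascA A1 C1 A2 B2) (cascB (X2 := X2) B1 D1) (cascC C2 D2)) :=
    (Submodule.isClosed_topologicalClosure _).completeSpace_coe
  set AA := cascA A1 C1 A2 B2 with hAAdef
  set BB := cascB (X2 := X2) B1 D1 with hBBdef
  set CC := cascC (X1 := X1) C2 D2 with hCCdef
  set Xcc : Submodule ℂ (hS X2 (hS V X1)) := ccSpace AA BB CC with hXccdef
  haveI : CompleteSpace Xcc := hcs
  set P := Submodule.orthogonalProjection Xcc with hPdef
  set X2s : Submodule ℂ (hS X2 (hS V X1)) :=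
    (⊤ : Submodule ℂ X2).map (inlL X2 (hS V X1)).toLinearMap with hX2sdef
  set X2Vs : Submodule ℂ (hS X2 (hS V X1)) :=
    LinearMap.ker ((sndL V X1).comp (sndL X2 (hS V X1))).toLinearMap with hX2Vsdef
  set Xcc2 : Submodule ℂ Xcc := (X2s.map P.toLinearMap).topologicalClosure with hXcc2def
  set EccS : Submodule ℂ Xcc := (X2Vs.map P.toLinearMap).topologicalClosure with hEccdef
  -- basic memberships in the closely connected subspace
  have hBmem : ∀ k u, BB k u ∈ Xcc := fun k u => ccSpace_mem_B AA BB CC k u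
  have hCmem : ∀ j y, adjL (CC j) y ∈ Xcc := fun j y => ccSpace_mem_Cadj AA BB CC j y
  have hAmem : ∀ k, ∀ x ∈ Xcc, AA k x ∈ Xcc := fun k => ccSpace_inv AA BB CC k
  have hAamem : ∀ k, ∀ x ∈ Xcc, adjL (AA k) x ∈ Xcc := fun k => ccSpace_inv_adj AA BB CC k
  -- per-k application formulas for the cascade operators
  have hAapp : ∀ k (p2 : X2) (q : V) (p1 : X1),
      AA k (hmk p2 (hmk q p1)) = hmk (A2 k p2 + B2 k q) (hmk (C1 k p1) (A1 k p1)) := by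
    intro k p2 q p1
    show block2 (A2 k) ((B2 k).comp (fstL V X1)) 0 (block2 0 (C1 k) 0 (A1 k))
        (hmk p2 (hmk q p1)) = _
    rw [block2_apply, block2_apply]
    apply hS_ext <;> simp
  have hAadjapp : ∀ k (p2 : X2) (q : V) (p1 : X1),
      adjL (AA k) (hmk p2 (hmk q p1)) =
        hmk (adjL (A2 k) p2) (hmk (adjL (B2 k) p2) (adjL (C1 k) q + adjL (A1 k) p1)) := by
    intro k p2 q p1
    show adjL (block2 (A2 k) ((B2 k).comp (fstL V X1)) 0 (block2 0 (C1 k) 0 (A1 k)))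
        (hmk p2 (hmk q p1)) = _
    rw [adjoint_block2]
    apply hS_ext <;>
      simp [fstL_block2, sndL_block2, adjoint_block2, ContinuousLinearMap.adjoint_comp,
        adjoint_fstL, adjoint_zero', block2_apply]
  have hBapp : ∀ k (u : U), BB k u = hmk 0 (hmk (D1 k u) (B1 k u)) := by
    intro k u
    show (inrL X2 (hS V X1)).comp ((inlL V X1).comp (D1 k) + (inrL V X1).comp (B1 k)) u = _
    apply hS_ext <;> simp
  have hBadjapp : ∀ k (p2 : X2) (q : V) (p1 : X1),
      adjL (BB k) (hmk p2 (hmk q p1)) = adjL (D1 k) q + adjL (B1 k) p1 := by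
    intro k p2 q p1
    show adjL ((inrL X2 (hS V X1)).comp ((inlL V X1).comp (D1 k) + (inrL V X1).comp (B1 k)))
        (hmk p2 (hmk q p1)) = _
    simp [ContinuousLinearMap.adjoint_comp, adjoint_add', adjoint_inlL, adjoint_inrL]
  have hCapp : ∀ k (p2 : X2) (q : V) (p1 : X1),
      CC k (hmk p2 (hmk q p1)) = C2 k p2 + D2 k q := by
    intro k p2 q p1
    show ((C2 k).comp (fstL X2 (hS V X1)) +
        (D2 k).comp ((fstL V X1).comp (sndL X2 (hS V X1)))) (hmk p2 (hmk q p1)) = _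
    simp
  have hCadjapp : ∀ k (y : Y),
      adjL (CC k) y = hmk (adjL (C2 k) y) (hmk (adjL (D2 k) y) 0) := by
    intro k y
    show adjL ((C2 k).comp (fstL X2 (hS V X1)) +
        (D2 k).comp ((fstL V X1).comp (sndL X2 (hS V X1)))) y = _
    rw [adjoint_add']
    apply hS_ext <;>
      simp [ContinuousLinearMap.adjoint_comp, adjoint_fstL, adjoint_sndL]
  -- Goal 1 : invariance of Xcc2 under the compressed main operators
  have goal1 : ∀ k, ∀ x ∈ Xcc2, (P.comp ((AA k).comp Xcc.subtypeL)) x ∈ Xcc2 := by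
    intro k
    have hAo : ∀ q ∈ Xccᗮ, AA k q ∈ Xccᗮ := by
      intro q hq
      have h := orth_inv (S := Xcc) (T := adjL (AA k)) (hAamem k) hq
      rwa [ContinuousLinearMap.adjoint_adjoint] at h
    have hcomap : IsClosed
        ((Xcc2.comap ((P.comp ((AA k).comp Xcc.subtypeL)).toLinearMap) : Submodule ℂ Xcc) :
          Set Xcc) :=
      (Submodule.isClosed_topologicalClosure _).preimage
        (P.comp ((AA k).comp Xcc.subtypeL)).continuous
    intro x hx
    refine Submodule.topologicalClosure_minimal _ ?_ hcomap hx
    rintro _ ⟨ξ, hξ, rfl⟩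
    show P (AA k ((P ξ : hS X2 (hS V X1)))) ∈ Xcc2
    have hsub : AA k ((P ξ : hS X2 (hS V X1))) = AA k ξ - AA k (ξ - (P ξ : hS X2 (hS V X1))) := by
      rw [← map_sub]
      congr 1
      abel
    have h0 : P (AA k (ξ - (P ξ : hS X2 (hS V X1)))) = 0 :=
      Submodule.orthogonalProjectionOnto_apply_of_mem_orthogonal
        (hAo _ (Submodule.sub_starProjection_mem_orthogonal ξ))
    rw [hsub, map_sub, h0, sub_zero]
    refine Submodule.le_topologicalClosure _ ⟨AA k ξ, ?_, rfl⟩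
    obtain ⟨a, -, rfl⟩ := hξ
    refine ⟨A2 k a, trivial, ?_⟩
    show inlL X2 (hS V X1) (A2 k a) = AA k (inlL X2 (hS V X1) a)
    rw [inlL_eq, inlL_eq, zero_hmk, hAapp]
    apply hS_ext <;> simp
  -- Goal 2
  have goal2 : ∀ ζ : Fin N → ℂ, onTorus ζ →
      ((Xcc2.comap (fstL Xcc Y).toLinearMap).map
          (adjL (pencil (sysBlock (fun k => P.comp ((AA k).comp Xcc.subtypeL))
            (fun k => P.comp (BB k)) (fun k => (CC k).comp Xcc.subtypeL) cascD) ζ)).toLinearMap) ⊓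
        (Xcc2.map (inlL Xcc U).toLinearMap)ᗮ =
      (EccS ⊓ Xcc2ᗮ).map (inlL Xcc U).toLinearMap := by
    intro ζ hζ
    -- pencil-level application formulas
    have hpAapp : ∀ (p2 : X2) (q : V) (p1 : X1),
        pencil AA ζ (hmk p2 (hmk q p1)) =
          hmk (pencil A2 ζ p2 + pencil B2 ζ q)
            (hmk (pencil C1 ζ p1) (pencil A1 ζ p1)) := by
      intro p2 q p1
      apply hS_ext <;>
        simp [pencil_apply, hAapp, map_sum, smul_add, Finset.sum_add_distrib]
    have hpAadjapp : ∀ (p2 : X2) (q : V) (p1 : X1),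
        adjL (pencil AA ζ) (hmk p2 (hmk q p1)) =
          hmk (adjL (pencil A2 ζ) p2)
            (hmk (adjL (pencil B2 ζ) p2) (adjL (pencil C1 ζ) q + adjL (pencil A1 ζ) p1)) := by
      intro p2 q p1
      simp only [adjoint_pencil]
      apply hS_ext <;>
        simp [pencil_apply, hAadjapp, adjoint_pencil, map_sum, smul_add,
          Finset.sum_add_distrib]
    have hpBapp : ∀ u : U, pencil BB ζ u = hmk 0 (hmk (pencil D1 ζ u) (pencil B1 ζ u)) := by
      intro u
      apply hS_ext <;>
        simp [pencil_apply, hBapp, map_sum, smul_add, Finset.sum_add_distrib]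
    have hpBadjapp : ∀ (p2 : X2) (q : V) (p1 : X1),
        adjL (pencil BB ζ) (hmk p2 (hmk q p1)) =
          adjL (pencil D1 ζ) q + adjL (pencil B1 ζ) p1 := by
      intro p2 q p1
      simp only [adjoint_pencil]
      simp [pencil_apply, hBadjapp, map_sum, smul_add, Finset.sum_add_distrib]
    have hpCapp : ∀ (p2 : X2) (q : V) (p1 : X1),
        pencil CC ζ (hmk p2 (hmk q p1)) = pencil C2 ζ p2 + pencil D2 ζ q := by
      intro p2 q p1
      simp [pencil_apply, hCapp, map_sum, smul_add, Finset.sum_add_distrib]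
    have hpCadjapp : ∀ y : Y,
        adjL (pencil CC ζ) y =
          hmk (adjL (pencil C2 ζ) y) (hmk (adjL (pencil D2 ζ) y) 0) := by
      intro y
      simp only [adjoint_pencil]
      apply hS_ext <;>
        simp [pencil_apply, hCadjapp, adjoint_pencil, map_sum, smul_add,
          Finset.sum_add_distrib]
    -- the full block operator of the cascade and its compression
    have hGapp : ∀ (x : hS X2 (hS V X1)) (u : U),
        pencil (sysBlock AA BB CC cascD) ζ (hmk x u) =
          hmk (pencil AA ζ x + pencil BB ζ u) (pencil CC ζ x) := by
      intro x u
      apply hS_ext <;>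
        simp [pencil_apply, sysBlock, fstL_block2, sndL_block2, cascD, map_sum,
          smul_add, Finset.sum_add_distrib]
    have hGadjapp : ∀ (x : hS X2 (hS V X1)) (y : Y),
        adjL (pencil (sysBlock AA BB CC cascD) ζ) (hmk x y) =
          hmk (adjL (pencil AA ζ) x + adjL (pencil CC ζ) y) (adjL (pencil BB ζ) x) := by
      intro x y
      simp only [adjoint_pencil]
      apply hS_ext <;>
        simp [pencil_apply, sysBlock, adjoint_block2, fstL_block2, sndL_block2,
          cascD, adjoint_zero', map_sum, smul_add, Finset.sum_add_distrib]
    have hGccapp : ∀ (x : Xcc) (u : U),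
        pencil (sysBlock (fun k => P.comp ((AA k).comp Xcc.subtypeL))
            (fun k => P.comp (BB k)) (fun k => (CC k).comp Xcc.subtypeL) cascD) ζ (hmk x u) =
          hmk (P (pencil AA ζ (x : hS X2 (hS V X1)) + pencil BB ζ u))
            (pencil CC ζ (x : hS X2 (hS V X1))) := by
      intro x u
      apply hS_ext <;>
        simp [pencil_apply, sysBlock, fstL_block2, sndL_block2, cascD, map_sum,
          smul_add, Finset.sum_add_distrib]
    have hGccadjapp : ∀ (x : Xcc) (y : Y),
        adjL (pencil (sysBlock (fun k => P.comp ((AA k).comp Xcc.subtypeL))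
            (fun k => P.comp (BB k)) (fun k => (CC k).comp Xcc.subtypeL) cascD) ζ) (hmk x y) =
          hmk (P (adjL (pencil AA ζ) (x : hS X2 (hS V X1))) + P (adjL (pencil CC ζ) y))
            (adjL (pencil BB ζ) (x : hS X2 (hS V X1))) := by
      intro x y
      simp only [adjoint_pencil]
      apply hS_ext <;>
        simp [pencil_apply, sysBlock, adjoint_block2, fstL_block2, sndL_block2,
          cascD, adjoint_zero', ContinuousLinearMap.adjoint_comp,
          Submodule.adjoint_subtypeL, Submodule.adjoint_orthogonalProjection,
          hPdef, Submodule.subtypeL_apply,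
          adjoint_pencil, map_sum, smul_add, Finset.sum_add_distrib]
    -- membership facts at the pencil level
    have hpBmem : ∀ u : U, pencil BB ζ u ∈ Xcc := fun u =>
      pencil_mem _ _ _ fun k => hBmem k u
    have hpCadjmem : ∀ y : Y, adjL (pencil CC ζ) y ∈ Xcc := by
      intro y
      rw [adjoint_pencil]
      exact pencil_mem _ _ _ fun k => hCmem k y
    have hpAmem : ∀ x ∈ Xcc, pencil AA ζ x ∈ Xcc := fun x hx =>
      pencil_mem _ _ _ fun k => hAmem k x hx
    have hpAadjmem : ∀ x ∈ Xcc, adjL (pencil AA ζ) x ∈ Xcc := by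
      intro x hx
      rw [adjoint_pencil]
      exact pencil_mem _ _ _ fun k => hAamem k x hx
    have hpAadjorth : ∀ q ∈ Xccᗮ, adjL (pencil AA ζ) q ∈ Xccᗮ := fun q hq =>
      orth_inv hpAmem hq
    have hpB0 : ∀ q ∈ Xccᗮ, adjL (pencil BB ζ) q = 0 := fun q hq =>
      adj_vanish hpBmem hq
    have hPcomm : ∀ ξ : hS X2 (hS V X1),
        ((P (adjL (pencil AA ζ) ξ)) : hS X2 (hS V X1)) = adjL (pencil AA ζ) (P ξ) :=
      proj_comm hpAadjmem hpAadjorth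
    have hPA : ∀ ξ : hS X2 (hS V X1),
        P (adjL (pencil AA ζ) ((P ξ : hS X2 (hS V X1)))) = P (adjL (pencil AA ζ) ξ) := by
      intro ξ
      apply Subtype.ext
      calc ((P (adjL (pencil AA ζ) ((P ξ : hS X2 (hS V X1))))) : hS X2 (hS V X1))
          = adjL (pencil AA ζ) ((P ((P ξ : hS X2 (hS V X1))) : hS X2 (hS V X1))) := hPcomm _
        _ = adjL (pencil AA ζ) ((P ξ : hS X2 (hS V X1))) := by
            rw [Submodule.orthogonalProjection_mem_subspace_eq_self]
        _ = ((P (adjL (pencil AA ζ) ξ)) : hS X2 (hS V X1)) := (hPcomm ξ).symm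
    -- computations on the distinguished subspaces
    have hs3 : ∀ ξ ∈ X2s, adjL (pencil BB ζ) ξ = 0 := by
      rintro _ ⟨a, -, rfl⟩
      show adjL (pencil BB ζ) (hmk a (hmk 0 0)) = 0
      rw [hpBadjapp]
      simp
    have hPBP0 : ∀ ξ ∈ X2s, adjL (pencil BB ζ) ((P ξ : hS X2 (hS V X1))) = 0 := by
      intro ξ hξ
      have hd : ((P ξ : hS X2 (hS V X1))) = ξ - (ξ - (P ξ : hS X2 (hS V X1))) := by abel
      rw [hd, map_sub, hs3 _ hξ, hpB0 _ (show ξ - (P ξ : hS X2 (hS V X1)) ∈ Xccᗮ from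
        Submodule.sub_starProjection_mem_orthogonal ξ), sub_zero]
    have hs1 : ∀ ξ ∈ X2s, adjL (pencil AA ζ) ξ ∈ X2Vs := by
      rintro _ ⟨a, -, rfl⟩
      show sndL V X1 (sndL X2 (hS V X1) (adjL (pencil AA ζ) (hmk a (hmk 0 0)))) = 0
      rw [hpAadjapp]
      simp
    have hs2 : ∀ y : Y, adjL (pencil CC ζ) y ∈ X2Vs := by
      intro y
      show sndL V X1 (sndL X2 (hS V X1) (adjL (pencil CC ζ) y)) = 0
      rw [hpCadjapp]
      simp
    have hEccA : ∀ x ∈ Xcc2, P (adjL (pencil AA ζ) (x : hS X2 (hS V X1))) ∈ EccS := by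
      have hclosed : IsClosed
          ((EccS.comap ((P.comp ((adjL (pencil AA ζ)).comp Xcc.subtypeL)).toLinearMap) :
            Submodule ℂ Xcc) : Set Xcc) :=
        (Submodule.isClosed_topologicalClosure _).preimage
          (P.comp ((adjL (pencil AA ζ)).comp Xcc.subtypeL)).continuous
      have hgen : X2s.map P.toLinearMap ≤
          EccS.comap ((P.comp ((adjL (pencil AA ζ)).comp Xcc.subtypeL)).toLinearMap) := by
        rintro _ ⟨ξ, hξ, rfl⟩
        show P (adjL (pencil AA ζ) ((P ξ : hS X2 (hS V X1)))) ∈ EccS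
        rw [hPA]
        exact Submodule.le_topologicalClosure _ ⟨_, hs1 ξ hξ, rfl⟩
      exact fun x hx => Submodule.topologicalClosure_minimal _ hgen hclosed hx
    have hEccC : ∀ y : Y, P (adjL (pencil CC ζ) y) ∈ EccS := fun y =>
      Submodule.le_topologicalClosure _ ⟨_, hs2 y, rfl⟩
    have hXcc2B0 : ∀ x ∈ Xcc2, adjL (pencil BB ζ) (x : hS X2 (hS V X1)) = 0 := by
      have hclosed : IsClosed
          ((LinearMap.ker (((adjL (pencil BB ζ)).comp Xcc.subtypeL).toLinearMap) :
            Submodule ℂ Xcc) : Set Xcc) :=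
        (isClosed_singleton (x := (0 : U))).preimage
          ((adjL (pencil BB ζ)).comp Xcc.subtypeL).continuous
      have hgen : X2s.map P.toLinearMap ≤
          LinearMap.ker (((adjL (pencil BB ζ)).comp Xcc.subtypeL).toLinearMap) := by
        rintro _ ⟨ξ, hξ, rfl⟩
        show adjL (pencil BB ζ) ((P ξ : hS X2 (hS V X1))) = 0
        exact hPBP0 ξ hξ
      exact fun x hx => Submodule.topologicalClosure_minimal _ hgen hclosed hx
    -- componentwise unitarity identities for the two subsystems
    have hG2app : ∀ (x2 : X2) (v : V),
        pencil (sysBlock A2 B2 C2 D2) ζ (hmk x2 v) =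
          hmk (pencil A2 ζ x2 + pencil B2 ζ v) (pencil C2 ζ x2 + pencil D2 ζ v) := by
      intro x2 v
      apply hS_ext <;>
        simp [pencil_apply, sysBlock, fstL_block2, sndL_block2, map_sum, smul_add,
          Finset.sum_add_distrib]
    have hG2adjapp : ∀ (x2 : X2) (y : Y),
        adjL (pencil (sysBlock A2 B2 C2 D2) ζ) (hmk x2 y) =
          hmk (adjL (pencil A2 ζ) x2 + adjL (pencil C2 ζ) y)
            (adjL (pencil B2 ζ) x2 + adjL (pencil D2 ζ) y) := by
      intro x2 y
      simp only [adjoint_pencil]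
      apply hS_ext <;>
        simp [pencil_apply, sysBlock, adjoint_block2, fstL_block2, sndL_block2,
          map_sum, smul_add, Finset.sum_add_distrib]
    have hG1app : ∀ (x1 : X1) (u : U),
        pencil (sysBlock A1 B1 C1 D1) ζ (hmk x1 u) =
          hmk (pencil A1 ζ x1 + pencil B1 ζ u) (pencil C1 ζ x1 + pencil D1 ζ u) := by
      intro x1 u
      apply hS_ext <;>
        simp [pencil_apply, sysBlock, fstL_block2, sndL_block2, map_sum, smul_add,
          Finset.sum_add_distrib]
    have hG1adjapp : ∀ (x1 : X1) (v : V),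
        adjL (pencil (sysBlock A1 B1 C1 D1) ζ) (hmk x1 v) =
          hmk (adjL (pencil A1 ζ) x1 + adjL (pencil C1 ζ) v)
            (adjL (pencil B1 ζ) x1 + adjL (pencil D1 ζ) v) := by
      intro x1 v
      simp only [adjoint_pencil]
      apply hS_ext <;>
        simp [pencil_apply, sysBlock, adjoint_block2, fstL_block2, sndL_block2,
          map_sum, smul_add, Finset.sum_add_distrib]
    have hU1 := hc1 ζ hζ
    have hU2 := hc2 ζ hζ
    have h2co : ∀ (x2 : X2) (y : Y),
        pencil A2 ζ (adjL (pencil A2 ζ) x2 + adjL (pencil C2 ζ) y) +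
            pencil B2 ζ (adjL (pencil B2 ζ) x2 + adjL (pencil D2 ζ) y) = x2 ∧
          pencil C2 ζ (adjL (pencil A2 ζ) x2 + adjL (pencil C2 ζ) y) +
            pencil D2 ζ (adjL (pencil B2 ζ) x2 + adjL (pencil D2 ζ) y) = y := by
      intro x2 y
      have h := congrArg (fun T : hS X2 Y →L[ℂ] hS X2 Y => T (hmk x2 y)) hU2.2
      simp only [ContinuousLinearMap.comp_apply, ContinuousLinearMap.one_apply] at h
      rw [hG2adjapp, hG2app] at h
      exact ⟨by simpa using congrArg (fstL X2 Y) h, by simpa using congrArg (sndL X2 Y) h⟩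
    have h1co : ∀ (x1 : X1) (v : V),
        pencil C1 ζ (adjL (pencil C1 ζ) v + adjL (pencil A1 ζ) x1) +
            pencil D1 ζ (adjL (pencil D1 ζ) v + adjL (pencil B1 ζ) x1) = v ∧
          pencil A1 ζ (adjL (pencil C1 ζ) v + adjL (pencil A1 ζ) x1) +
            pencil B1 ζ (adjL (pencil D1 ζ) v + adjL (pencil B1 ζ) x1) = x1 := by
      intro x1 v
      have h := congrArg (fun T : hS X1 V →L[ℂ] hS X1 V => T (hmk x1 v)) hU1.2
      simp only [ContinuousLinearMap.comp_apply, ContinuousLinearMap.one_apply] at h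
      rw [hG1adjapp, hG1app] at h
      constructor
      · have := congrArg (sndL X1 V) h
        simpa [add_comm] using this
      · have := congrArg (fstL X1 V) h
        simpa [add_comm] using this
    have h2contr : ∀ t : hS X2 V,
        adjL (pencil (sysBlock A2 B2 C2 D2) ζ) (pencil (sysBlock A2 B2 C2 D2) ζ t) = t := by
      intro t
      have h := congrArg (fun T : hS X2 V →L[ℂ] hS X2 V => T t) hU2.1
      simpa using h
    -- full-system adjoint is a co-isometry
    have hco : ∀ z : hS (hS X2 (hS V X1)) Y,
        pencil (sysBlock AA BB CC cascD) ζ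
          (adjL (pencil (sysBlock AA BB CC cascD) ζ) z) = z := by
      intro z
      suffices h : ∀ (x2 : X2) (v : V) (x1 : X1) (y : Y),
          pencil (sysBlock AA BB CC cascD) ζ
            (adjL (pencil (sysBlock AA BB CC cascD) ζ) (hmk (hmk x2 (hmk v x1)) y)) =
            hmk (hmk x2 (hmk v x1)) y by
        have := h (fstL X2 (hS V X1) (fstL (hS X2 (hS V X1)) Y z))
          (fstL V X1 (sndL X2 (hS V X1) (fstL (hS X2 (hS V X1)) Y z)))
          (sndL V X1 (sndL X2 (hS V X1) (fstL (hS X2 (hS V X1)) Y z)))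
          (sndL (hS X2 (hS V X1)) Y z)
        simpa using this
      intro x2 v x1 y
      rw [hGadjapp, hpAadjapp, hpCadjapp]
      simp only [hmk_add, add_zero]
      rw [hGapp, hpAapp, hpBapp, hpCapp, hpBadjapp]
      have e2 := h2co x2 y
      have e1 := h1co x1 v
      apply hS_ext
      · apply hS_ext
        · simpa using e2.1
        · apply hS_ext
          · simpa using e1.1
          · simpa using e1.2
      · simpa using e2.2
    -- compressed adjoint is an isometry
    have hcocc : ∀ z : hS Xcc Y,
        pencil (sysBlock (fun k => P.comp ((AA k).comp Xcc.subtypeL))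
            (fun k => P.comp (BB k)) (fun k => (CC k).comp Xcc.subtypeL) cascD) ζ
          (adjL (pencil (sysBlock (fun k => P.comp ((AA k).comp Xcc.subtypeL))
            (fun k => P.comp (BB k)) (fun k => (CC k).comp Xcc.subtypeL) cascD) ζ) z) = z := by
      intro z
      suffices h : ∀ (x : Xcc) (y : Y),
          pencil (sysBlock (fun k => P.comp ((AA k).comp Xcc.subtypeL))
              (fun k => P.comp (BB k)) (fun k => (CC k).comp Xcc.subtypeL) cascD) ζ
            (adjL (pencil (sysBlock (fun k => P.comp ((AA k).comp Xcc.subtypeL))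
              (fun k => P.comp (BB k)) (fun k => (CC k).comp Xcc.subtypeL) cascD) ζ)
              (hmk x y)) = hmk x y by
        have := h (fstL Xcc Y z) (sndL Xcc Y z)
        simpa using this
      intro x y
      rw [hGccadjapp, hGccapp]
      have hmem1 : adjL (pencil AA ζ) (x : hS X2 (hS V X1)) ∈ Xcc := hpAadjmem _ x.2
      have hmem2 : adjL (pencil CC ζ) y ∈ Xcc := hpCadjmem y
      have hcoe : ((P (adjL (pencil AA ζ) (x : hS X2 (hS V X1))) +
            P (adjL (pencil CC ζ) y) : Xcc) : hS X2 (hS V X1)) =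
          adjL (pencil AA ζ) (x : hS X2 (hS V X1)) + adjL (pencil CC ζ) y := by
        push_cast
        rw [Submodule.coe_orthogonalProjection_apply, Submodule.coe_orthogonalProjection_apply,
            Submodule.starProjection_eq_self_iff.mpr hmem1, Submodule.starProjection_eq_self_iff.mpr hmem2]
      rw [hcoe]
      have hfull := hco (hmk (x : hS X2 (hS V X1)) y)
      rw [hGadjapp, hGapp] at hfull
      have hfull1 := congrArg (fstL (hS X2 (hS V X1)) Y) hfull
      have hfull2 := congrArg (sndL (hS X2 (hS V X1)) Y) hfull
      simp only [fstL_hmk, sndL_hmk] at hfull1 hfull2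
      apply hS_ext
      · simp only [fstL_hmk]
        rw [hfull1]
        exact Submodule.orthogonalProjection_mem_subspace_eq_self x
      · simpa using hfull2
    have hGccIso : Isometry (adjL (pencil (sysBlock (fun k => P.comp ((AA k).comp Xcc.subtypeL))
        (fun k => P.comp (BB k)) (fun k => (CC k).comp Xcc.subtypeL) cascD) ζ)) := by
      apply AddMonoidHomClass.isometry_of_norm
      intro z
      refine (ContinuousLinearMap.norm_map_iff_adjoint_comp_self _).mpr ?_ z
      rw [ContinuousLinearMap.adjoint_adjoint]
      exact ContinuousLinearMap.ext hcocc
    -- the image submodule equals EccS ⊕ 0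
    have hK1 : (Xcc2.comap (fstL Xcc Y).toLinearMap).map
        (adjL (pencil (sysBlock (fun k => P.comp ((AA k).comp Xcc.subtypeL))
          (fun k => P.comp (BB k)) (fun k => (CC k).comp Xcc.subtypeL) cascD) ζ)).toLinearMap ≤
        EccS.map (inlL Xcc U).toLinearMap := by
      rintro _ ⟨w, hw, rfl⟩
      have hw' : fstL Xcc Y w ∈ Xcc2 := hw
      refine ⟨P (adjL (pencil AA ζ) ((fstL Xcc Y w : Xcc) : hS X2 (hS V X1))) +
          P (adjL (pencil CC ζ) (sndL Xcc Y w)), EccS.add_mem (hEccA _ hw') (hEccC _), ?_⟩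
      have h := hGccadjapp (fstL Xcc Y w) (sndL Xcc Y w)
      rw [hmk_fst_snd] at h
      simp only [ContinuousLinearMap.coe_coe]
      rw [inlL_eq, h, hXcc2B0 _ hw']
    have hSccClosed : IsClosed
        (((Xcc2.comap (fstL Xcc Y).toLinearMap).map
          (adjL (pencil (sysBlock (fun k => P.comp ((AA k).comp Xcc.subtypeL))
            (fun k => P.comp (BB k)) (fun k => (CC k).comp Xcc.subtypeL) cascD) ζ)).toLinearMap :
          Submodule ℂ (hS Xcc U)) : Set (hS Xcc U)) := by
      have hK : IsClosed ((Xcc2.comap (fstL Xcc Y).toLinearMap : Submodule ℂ (hS Xcc Y)) :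
          Set (hS Xcc Y)) :=
        (Submodule.isClosed_topologicalClosure _).preimage (fstL Xcc Y).continuous
      exact ((isComplete_image_iff hGccIso.isUniformInducing).mpr hK.isComplete).isClosed
    have hK2 : EccS.map (inlL Xcc U).toLinearMap ≤
        (Xcc2.comap (fstL Xcc Y).toLinearMap).map
          (adjL (pencil (sysBlock (fun k => P.comp ((AA k).comp Xcc.subtypeL))
            (fun k => P.comp (BB k)) (fun k => (CC k).comp Xcc.subtypeL) cascD) ζ)).toLinearMap := by
      have hgen : (X2Vs.map P.toLinearMap).map (inlL Xcc U).toLinearMap ≤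
          (Xcc2.comap (fstL Xcc Y).toLinearMap).map
            (adjL (pencil (sysBlock (fun k => P.comp ((AA k).comp Xcc.subtypeL))
              (fun k => P.comp (BB k)) (fun k => (CC k).comp Xcc.subtypeL) cascD)
                ζ)).toLinearMap := by
        rintro _ ⟨_, ⟨η, hη, rfl⟩, rfl⟩
        have hη' : sndL V X1 (sndL X2 (hS V X1) η) = 0 := hη
        -- use surjectivity of the adjoint of the second system
        set s : hS X2 Y := pencil (sysBlock A2 B2 C2 D2) ζ
          (hmk (fstL X2 (hS V X1) η) (fstL V X1 (sndL X2 (hS V X1) η))) with hsdef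
        have hid := h2contr (hmk (fstL X2 (hS V X1) η) (fstL V X1 (sndL X2 (hS V X1) η)))
        rw [← hsdef] at hid
        rw [show s = hmk (fstL X2 Y s) (sndL X2 Y s) from (hmk_fst_snd s).symm, hG2adjapp] at hid
        have hid1 := congrArg (fstL X2 V) hid
        have hid2 := congrArg (sndL X2 V) hid
        simp only [fstL_hmk, sndL_hmk] at hid1 hid2
        refine ⟨hmk (P (hmk (fstL X2 Y s) (hmk 0 0))) (sndL X2 Y s), ?_, ?_⟩
        · show fstL Xcc Y _ ∈ Xcc2
          rw [fstL_hmk]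
          refine Submodule.le_topologicalClosure _ ⟨hmk (fstL X2 Y s) (hmk 0 0),
            ⟨fstL X2 Y s, trivial, rfl⟩, rfl⟩
        · simp only [ContinuousLinearMap.coe_coe]
          rw [hGccadjapp]
          have hz : adjL (pencil BB ζ) ((P (hmk (fstL X2 Y s) (hmk 0 0)) : hS X2 (hS V X1))) = 0 :=
            hPBP0 _ ⟨fstL X2 Y s, trivial, rfl⟩
          rw [hz, hPA]
          have hsum : P (adjL (pencil AA ζ) (hmk (fstL X2 Y s) (hmk 0 0))) +
              P (adjL (pencil CC ζ) (sndL X2 Y s)) = P η := by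
            rw [← map_add]
            congr 1
            rw [hpAadjapp, hpCadjapp]
            apply hS_ext
            · simpa using hid1
            · apply hS_ext
              · simpa using hid2
              · simp [hη']
          rw [hsum]
          show _ = inlL Xcc U (P η)
          rw [inlL_eq]
      have hmapmono := Submodule.topologicalClosure_map (inlL Xcc U) (X2Vs.map P.toLinearMap)
      refine le_trans ?_ (Submodule.topologicalClosure_minimal _ hgen hSccClosed)
      exact le_trans hmapmono (Submodule.topologicalClosure_mono le_rfl)
    have hKey : (Xcc2.comap (fstL Xcc Y).toLinearMap).map
        (adjL (pencil (sysBlock (fun k => P.comp ((AA k).comp Xcc.subtypeL))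
          (fun k => P.comp (BB k)) (fun k => (CC k).comp Xcc.subtypeL) cascD) ζ)).toLinearMap =
        EccS.map (inlL Xcc U).toLinearMap := le_antisymm hK1 hK2
    rw [hKey]
    -- final bookkeeping with the orthogonal complement
    ext z
    constructor
    · rintro ⟨⟨e, he, rfl⟩, hz2⟩
      refine ⟨e, ⟨he, ?_⟩, rfl⟩
      refine (Submodule.mem_orthogonal _ _).mpr ?_
      intro m hm
      have := (Submodule.mem_orthogonal _ _).mp hz2 (inlL Xcc U m) ⟨m, hm, rfl⟩
      simpa [inner_hS, inlL_eq, fstL_apply', sndL_apply'] using this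
    · rintro ⟨e, ⟨he1, he2⟩, rfl⟩
      refine ⟨⟨e, he1, rfl⟩, ?_⟩
      refine (Submodule.mem_orthogonal _ _).mpr ?_
      rintro _ ⟨m, hm, rfl⟩
      have := (Submodule.mem_orthogonal _ _).mp he2 m hm
      simpa [inner_hS, inlL_eq, fstL_apply', sndL_apply'] using this
  exact ⟨goal1, goal2⟩
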